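/- Let p,q ∈ ℝⁿ₊, p',q' ∈ ℝⁿ'₊, and ε, η ≥ 0. Then (p,q) ≻_{ε,η} (p',q') holds if and only if β_x(p,q) ≤ β_{x+ε}(p',q') + η for all x ∈ ℝ. -/

import Mathlib

open scoped BigOperators

/-- A test: a vector with entries in `[0,1]`. -/
def IsTest {ι : Type*} [Fintype ι] (t : ι → ℝ) : Prop := ∀ i, 0 ≤ t i ∧ t i ≤ 1

/-- Dot product of two vectors. -/
def dot {ι : Type*} [Fintype ι] (t p : ι → ℝ) : ℝ := ∑ i, t i * p i

/-- `beta x p q` is the infimum of `t ⬝ q` over tests `t` with `t ⬝ p ≥ x`,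
with value `⊤` (`+∞`) when no feasible test exists. -/
noncomputable def beta {ι : Type*} [Fintype ι] (x : ℝ) (p q : ι → ℝ) : EReal :=
  sInf {y : EReal | ∃ t : ι → ℝ, IsTest t ∧ x ≤ dot t p ∧ y = ((dot t q : ℝ) : EReal)}

/-- `alpha y p q` is the supremum of `t ⬝ p` over tests `t` with `t ⬝ q ≤ y`. -/
noncomputable def alpha {ι : Type*} [Fintype ι] (y : ℝ) (p q : ι → ℝ) : ℝ :=
  sSup {x : ℝ | ∃ t : ι → ℝ, IsTest t ∧ dot t q ≤ y ∧ x = dot t p}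

/-- A nonnegative matrix all of whose column sums are at most `1`. -/
def Substochastic {ι' ι : Type*} [Fintype ι'] [Fintype ι] (M : Matrix ι' ι ℝ) : Prop :=
  (∀ i j, 0 ≤ M i j) ∧ ∀ j, ∑ i, M i j ≤ 1

/-- A nonnegative matrix all of whose column sums equal `1`. -/
def Stochastic {ι' ι : Type*} [Fintype ι'] [Fintype ι] (M : Matrix ι' ι ℝ) : Prop :=
  (∀ i j, 0 ≤ M i j) ∧ ∀ j, ∑ i, M i j = 1

/-- Relative submajorization: `(p,q) ≻ (p',q')`. -/
def SubMaj {ι ι' : Type*} [Fintype ι] [Fintype ι'] (p q : ι → ℝ) (p' q' : ι' → ℝ) : Prop :=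
  ∃ M : Matrix ι' ι ℝ, Substochastic M ∧
    (∀ i, p' i ≤ M.mulVec p i) ∧ (∀ i, M.mulVec q i ≤ q' i)

/-- Relative majorization: `(p,q) ≽ (p',q')`. -/
def RelMaj {ι ι' : Type*} [Fintype ι] [Fintype ι'] (p q : ι → ℝ) (p' q' : ι' → ℝ) : Prop :=
  ∃ M : Matrix ι' ι ℝ, Stochastic M ∧ M.mulVec p = p' ∧ M.mulVec q = q'

/-- Approximate relative submajorization: `(p,q) ≻_{ε,η} (p',q')`. -/
def ApproxSubMaj {ι ι' : Type*} [Fintype ι] [Fintype ι'] (ε η : ℝ)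
    (p q : ι → ℝ) (p' q' : ι' → ℝ) : Prop :=
  ∃ (M : Matrix ι' ι ℝ) (a b : ι' → ℝ), Substochastic M ∧
    (∀ i, 0 ≤ a i) ∧ (∀ i, 0 ≤ b i) ∧ (∑ i, a i) ≤ ε ∧ (∑ i, b i) ≤ η ∧
    (∀ i, p' i - a i ≤ M.mulVec p i) ∧ (∀ i, M.mulVec q i ≤ q' i + b i)

/-- Partial sum `∑_{j=1}^k v_{π(j)}` of the first `k` entries of `v` in the order given by `π`. -/
def psum {n : ℕ} (v : Fin n → ℝ) (π : Equiv.Perm (Fin n)) (k : ℕ) : ℝ :=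
  ∑ j ∈ Finset.univ.filter (fun j : Fin n => (j : ℕ) < k), v (π j)

/-- `λ*_z(R→R')`: the largest `λ ∈ [0,1]` with `(p,q) ≻ (λ p', z q')`. -/
noncomputable def lambdaStar {ι ι' : Type*} [Fintype ι] [Fintype ι'] (z : ℝ)
    (p q : ι → ℝ) (p' q' : ι' → ℝ) : ℝ :=
  sSup {lam : ℝ | 0 ≤ lam ∧ lam ≤ 1 ∧
    SubMaj p q (fun i => lam * p' i) (fun i => z * q' i)}

/-- `z*_λ(R→R')`: the smallest `z ≥ 0` with `(p,q) ≻ (λ p', z q')`. -/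
noncomputable def zStar {ι ι' : Type*} [Fintype ι] [Fintype ι'] (lam : ℝ)
    (p q : ι → ℝ) (p' q' : ι' → ℝ) : ℝ :=
  sInf {z : ℝ | 0 ≤ z ∧ SubMaj p q (fun i => lam * p' i) (fun i => z * q' i)}

/-- `ε*_z(R→R')`: the smallest error of the first kind. -/
noncomputable def epsStar {ι ι' : Type*} [Fintype ι] [Fintype ι'] (z : ℝ)
    (p q : ι → ℝ) (p' q' : ι' → ℝ) : ℝ :=
  sInf {ε : ℝ | 0 ≤ ε ∧ ApproxSubMaj ε 0 p q p' (fun i => z * q' i)}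

/-- `η̂*_z(R→R')`: the smallest error of the second kind. -/
noncomputable def etaStar {ι ι' : Type*} [Fintype ι] [Fintype ι'] (z : ℝ)
    (p q : ι → ℝ) (p' q' : ι' → ℝ) : ℝ :=
  sInf {η : ℝ | 0 ≤ η ∧ ApproxSubMaj 0 η p q p' (fun i => z * q' i)}

/-- Relative entropy `D(u,v) = Σ u_k ln(u_k/v_k)` (with `0 ln 0 = 0`). -/
noncomputable def relEnt {ι : Type*} [Fintype ι] (u v : ι → ℝ) : ℝ :=
  ∑ k, u k * Real.log (u k / v k)

/-!
(→) A test `t'` for `(p',q')` pulls back along `M` to the test `t' ᵥ* M` for `(p,q)`, losing at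
most `ε` in power and `η` in cost.

(←) Testing with threshold tests turns the β-inequalities into the hockey-stick inequalities
`∑ (p' - γ q')₊ - ε - γ η ≤ ∑ (p - γ q)₊` for `γ ≥ 0`. If `(p,q) ≻_{ε,η} (p',q')` failed,
Hahn–Banach would separate the pairs `(M p, M q)` from the pairs within `(ε,η)` of `(p',q')` by
weights `s, w ≥ 0`, and the best `M` would attain `∑ⱼ g(pⱼ,qⱼ)` for the convex envelope
`g(P,Q) = max (0, maxᵢ (sᵢ P - wᵢ Q))`. Writing `g` as a nonnegative combination of hockey sticks
`(P - γ Q)₊` and summing the hockey-stick inequalities contradicts the separation.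
-/

open Finset Matrix

lemma nonneg_of_forall_lt_add_mul {r a x : ℝ} (h : ∀ t, 0 ≤ t → r < a + t * x) : 0 ≤ x := by
  by_contra! hx
  have := h ((a - r) / -x) (div_nonneg (by linarith [h 0 le_rfl]) (by linarith))
  rw [div_mul_eq_mul_div, div_neg, mul_div_cancel_right₀ _ hx.ne] at this
  linarith

section Tests

variable {ι ι' : Type*} [Fintype ι] [Fintype ι']

lemma beta_le_dot {x : ℝ} {p q t : ι → ℝ} (ht : IsTest t) (hx : x ≤ dot t p) :
    beta x p q ≤ (dot t q : EReal) :=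
  sInf_le ⟨t, ht, hx, rfl⟩

lemma IsTest.dot_le_dot {t u v : ι → ℝ} (ht : IsTest t) (huv : ∀ i, u i ≤ v i) :
    dot t u ≤ dot t v :=
  sum_le_sum fun i _ => mul_le_mul_of_nonneg_left (huv i) (ht i).1

lemma IsTest.dot_le_sum {t a : ι → ℝ} (ht : IsTest t) (ha : ∀ i, 0 ≤ a i) :
    dot t a ≤ ∑ i, a i :=
  sum_le_sum fun i _ => mul_le_of_le_one_left (ha i) (ht i).2

lemma Substochastic.isTest_vecMul {M : Matrix ι' ι ℝ} (hM : Substochastic M) {t : ι' → ℝ}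
    (ht : IsTest t) : IsTest (t ᵥ* M) := fun j =>
  ⟨sum_nonneg fun i _ => mul_nonneg (ht i).1 (hM.1 i j),
    (sum_le_sum fun i _ => mul_le_of_le_one_left (hM.1 i j) (ht i).2).trans (hM.2 j)⟩

lemma dot_vecMul (t : ι' → ℝ) (M : Matrix ι' ι ℝ) (v : ι → ℝ) :
    dot (t ᵥ* M) v = dot t (M *ᵥ v) :=
  (dotProduct_mulVec t M v).symm

theorem ApproxSubMaj.beta_le {ε η : ℝ} {p q : ι → ℝ} {p' q' : ι' → ℝ}
    (h : ApproxSubMaj ε η p q p' q') (x : ℝ) :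
    beta x p q ≤ beta (x + ε) p' q' + (η : EReal) := by
  obtain ⟨M, a, b, hM, ha, hb, hεa, hηb, hMp, hMq⟩ := h
  rw [← EReal.sub_le_iff_le_add (.inl (EReal.coe_ne_bot η)) (.inl (EReal.coe_ne_top η))]
  refine le_sInf ?_
  rintro _ ⟨t, ht, hxt, rfl⟩
  refine EReal.sub_le_of_le_add ?_
  have hp : x ≤ dot (t ᵥ* M) p :=
    calc x ≤ dot t p' - dot t a := by linarith [ht.dot_le_sum ha]
      _ = dot t (fun i => p' i - a i) := by simp only [dot, mul_sub, sum_sub_distrib]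
      _ ≤ dot (t ᵥ* M) p := (ht.dot_le_dot hMp).trans_eq (dot_vecMul t M p).symm
  have hq : dot (t ᵥ* M) q ≤ dot t q' + η :=
    calc dot (t ᵥ* M) q ≤ dot t (fun i => q' i + b i) :=
          (dot_vecMul t M q).trans_le (ht.dot_le_dot hMq)
      _ = dot t q' + dot t b := by simp only [dot, mul_add, sum_add_distrib]
      _ ≤ dot t q' + η := by linarith [ht.dot_le_sum hb]
  calc beta x p q ≤ (dot (t ᵥ* M) q : EReal) := beta_le_dot (hM.isTest_vecMul ht) hp
    _ ≤ _ := by exact_mod_cast hq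

end Tests

section HockeyStick

variable {ι : Type*} [Fintype ι]

def hockeyStick (γ : ℝ) (p q : ι → ℝ) : ℝ := ∑ i, max (p i - γ * q i) 0

lemma IsTest.dot_sub_mul_le_hockeyStick {t : ι → ℝ} (ht : IsTest t) (γ : ℝ) (p q : ι → ℝ) :
    dot t p - γ * dot t q ≤ hockeyStick γ p q := by
  rw [dot, dot, mul_sum, ← sum_sub_distrib]
  refine sum_le_sum fun i _ => ?_
  calc t i * p i - γ * (t i * q i) = t i * (p i - γ * q i) := by ring
    _ ≤ t i * max (p i - γ * q i) 0 := mul_le_mul_of_nonneg_left (le_max_left _ _) (ht i).1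
    _ ≤ max (p i - γ * q i) 0 := mul_le_of_le_one_left (le_max_right _ _) (ht i).2

lemma exists_isTest_dot_sub_mul_eq_hockeyStick (γ : ℝ) (p q : ι → ℝ) :
    ∃ t, IsTest t ∧ dot t p - γ * dot t q = hockeyStick γ p q := by
  classical
  refine ⟨fun i => if 0 ≤ p i - γ * q i then 1 else 0,
    fun i => by dsimp only; split_ifs <;> norm_num, ?_⟩
  rw [dot, dot, mul_sum, ← sum_sub_distrib]
  refine sum_congr rfl fun i _ => ?_
  split_ifs with h
  · rw [max_eq_left h]; ring
  · rw [max_eq_right (by linarith)]; ring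

lemma sub_mul_le_hockeyStick_of_beta_le {x c γ : ℝ} {p q : ι → ℝ} (h : beta x p q ≤ c)
    (hγ : 0 ≤ γ) : x - γ * c ≤ hockeyStick γ p q := by
  refine le_of_forall_pos_le_add fun δ hδ => ?_
  have hδ' : 0 < δ / (γ + 1) := by positivity
  have hlt : beta x p q < ((c + δ / (γ + 1) : ℝ) : EReal) :=
    h.trans_lt (by exact_mod_cast lt_add_of_pos_right c hδ')
  obtain ⟨_, ⟨t, ht, hxt, rfl⟩, htc⟩ := sInf_lt_iff.1 hlt
  have htc : dot t q ≤ c + δ / (γ + 1) := by exact_mod_cast htc.le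
  have hγδ : γ * (δ / (γ + 1)) ≤ δ := by
    rw [mul_div_assoc']
    exact div_le_of_le_mul₀ (by positivity) hδ.le (by nlinarith)
  nlinarith [ht.dot_sub_mul_le_hockeyStick γ p q, mul_le_mul_of_nonneg_left htc hγ]

lemma hockeyStick_sub_le_of_beta_le {ι' : Type*} [Fintype ι'] {ε η : ℝ} {p q : ι → ℝ}
    {p' q' : ι' → ℝ} (h : ∀ x, beta x p q ≤ beta (x + ε) p' q' + (η : EReal)) {γ : ℝ}
    (hγ : 0 ≤ γ) : hockeyStick γ p' q' - ε - γ * η ≤ hockeyStick γ p q := by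
  obtain ⟨t, ht, htγ⟩ := exists_isTest_dot_sub_mul_eq_hockeyStick γ p' q'
  have hβ : beta (dot t p' - ε) p q ≤ ((dot t q' + η : ℝ) : EReal) :=
    calc beta (dot t p' - ε) p q ≤ beta (dot t p' - ε + ε) p' q' + (η : EReal) := h _
      _ ≤ (dot t q' : EReal) + η := by
          gcongr
          exact beta_le_dot ht (by simp)
      _ = _ := by norm_cast
  have := sub_mul_le_hockeyStick_of_beta_le hβ hγ
  linarith

end HockeyStick

section StickSum

variable {ι : Type*}

def stickSum (T : Finset ι) (c γ : ι → ℝ) (P Q : ℝ) : ℝ :=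
  ∑ i ∈ T, c i * max (P - γ i * Q) 0

variable {T : Finset ι} {c γ : ι → ℝ}

lemma stickSum_mul_mul {t : ℝ} (ht : 0 ≤ t) (P Q : ℝ) :
    stickSum T c γ (t * P) (t * Q) = t * stickSum T c γ P Q := by
  simp only [stickSum, mul_sum]
  refine sum_congr rfl fun i _ => ?_
  rw [mul_left_comm t, mul_max_of_nonneg _ _ ht, mul_zero, mul_sub, mul_left_comm t (γ i)]

lemma stickSum_zero_right {P : ℝ} (hP : 0 ≤ P) :
    stickSum T c γ P 0 = (∑ i ∈ T, c i) * P := by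
  simp [stickSum, max_eq_left hP, sum_mul]

lemma stickSum_zero_left (hγ : ∀ i, 0 ≤ γ i) {Q : ℝ} (hQ : 0 ≤ Q) : stickSum T c γ 0 Q = 0 :=
  sum_eq_zero fun i _ => by
    rw [max_eq_right (by nlinarith [hγ i]), mul_zero]

lemma stickSum_le_stickSum_add (hc : ∀ i, 0 ≤ c i) (Q : ℝ) {P P' : ℝ} (h : P ≤ P') :
    stickSum T c γ P' Q ≤ stickSum T c γ P Q + (∑ i ∈ T, c i) * (P' - P) := by
  rw [stickSum, stickSum, sum_mul, ← sum_add_distrib]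
  refine sum_le_sum fun i _ => ?_
  rw [← mul_add]
  refine mul_le_mul_of_nonneg_left ?_ (hc i)
  rcases le_total (P - γ i * Q) 0 with h' | h'
  · rw [max_eq_right h']
    exact max_le (by linarith) (by linarith)
  · rw [max_eq_left h']
    exact max_le (by linarith) (by linarith)

lemma stickSum_le_mul (hc : ∀ i, 0 ≤ c i) (hγ : ∀ i, 0 ≤ γ i) {x : ℝ} (hx : 0 ≤ x) :
    stickSum T c γ x 1 ≤ (∑ i ∈ T, c i) * x := by
  simpa [stickSum_zero_left hγ zero_le_one] using stickSum_le_stickSum_add (T := T) (γ := γ) hc 1 hx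

lemma continuous_stickSum (Q : ℝ) : Continuous fun P => stickSum T c γ P Q := by
  unfold stickSum
  fun_prop

lemma max_sub_min_mul_eq {P Q γ x₀ : ℝ} (hQ : 0 ≤ Q) :
    max (P - min γ x₀ * Q) 0 = max (min P (x₀ * Q) - γ * Q) 0 + max (P - x₀ * Q) 0 := by
  rcases le_total γ x₀ with h | h <;> rcases le_total P (x₀ * Q) with h' | h'
  · rw [min_eq_left h, min_eq_left h', max_eq_right (by linarith : P - x₀ * Q ≤ 0), add_zero]
  · rw [min_eq_left h, min_eq_right h', max_eq_left (by linarith : 0 ≤ P - x₀ * Q),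
      max_eq_left (by nlinarith : 0 ≤ P - γ * Q), max_eq_left (by nlinarith : 0 ≤ x₀ * Q - γ * Q)]
    ring
  · rw [min_eq_right h, min_eq_left h', max_eq_right (by linarith : P - x₀ * Q ≤ 0),
      max_eq_right (by nlinarith : P - γ * Q ≤ 0), add_zero]
  · rw [min_eq_right h, min_eq_right h', max_eq_right (by nlinarith : x₀ * Q - γ * Q ≤ 0),
      zero_add]

lemma stickSum_min (x₀ : ℝ) {P Q : ℝ} (hQ : 0 ≤ Q) :
    stickSum T c (fun i => min (γ i) x₀) P Q =
      stickSum T c γ (min P (x₀ * Q)) Q + (∑ i ∈ T, c i) * max (P - x₀ * Q) 0 := by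
  simp only [stickSum, max_sub_min_mul_eq hQ, mul_add, sum_add_distrib, sum_mul]

lemma sum_mul_min_eq (x₀ : ℝ) :
    ∑ i ∈ T, c i * min (γ i) x₀ = (∑ i ∈ T, c i) * x₀ - stickSum T c γ x₀ 1 := by
  rw [stickSum, sum_mul, ← sum_sub_distrib]
  refine sum_congr rfl fun i _ => ?_
  rw [← mul_sub, mul_one, ← min_sub_sub_left x₀ (x₀ - γ i) 0]
  simp

lemma mul_sub_mul_le_stickSum (hc : ∀ i, 0 ≤ c i) (hγ : ∀ i, 0 ≤ γ i) {s₀ w₀ : ℝ}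
    (hle : ∀ x, 0 ≤ x → s₀ * x - w₀ ≤ stickSum T c γ x 1) {P Q : ℝ} (hP : 0 ≤ P) (hQ : 0 ≤ Q) :
    s₀ * P - w₀ * Q ≤ stickSum T c γ P Q := by
  rcases hQ.eq_or_lt with rfl | hQ
  · have hs₀ : 0 ≤ ∑ i ∈ T, c i - s₀ := nonneg_of_forall_lt_add_mul (r := -w₀ - 1) (a := 0)
      fun x hx => by linarith [hle x hx, stickSum_le_mul hc hγ (T := T) hx]
    rw [stickSum_zero_right hP, mul_zero, sub_zero]
    nlinarith
  · have h := stickSum_mul_mul (T := T) (c := c) (γ := γ) hQ.le (P / Q) 1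
    rw [mul_div_cancel₀ _ hQ.ne', mul_one] at h
    rw [h]
    have := mul_le_mul_of_nonneg_left (hle (P / Q) (by positivity)) hQ.le
    rwa [mul_sub, mul_left_comm, mul_div_cancel₀ _ hQ.ne', mul_comm Q w₀] at this

lemma sum_stickSum_eq {κ : Type*} [Fintype κ] (p q : κ → ℝ) :
    ∑ j, stickSum T c γ (p j) (q j) = ∑ k ∈ T, c k * hockeyStick (γ k) p q := by
  simp only [stickSum, hockeyStick, mul_sum]
  exact sum_comm

end StickSum

section Decomposition

variable {ι : Type*} [DecidableEq ι] {T : Finset ι} {a : ι} {c γ : ι → ℝ}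

lemma sum_insert_update_update (ha : a ∉ T) (F : ℝ → ℝ → ℝ) (c₀ γ₀ : ℝ) :
    ∑ i ∈ insert a T, F (Function.update c a c₀ i) (Function.update γ a γ₀ i) =
      F c₀ γ₀ + ∑ i ∈ T, F (c i) (γ i) := by
  rw [sum_insert ha, Function.update_self, Function.update_self]
  congr 1
  refine sum_congr rfl fun i hi => ?_
  rw [Function.update_of_ne (ne_of_mem_of_not_mem hi ha),
    Function.update_of_ne (ne_of_mem_of_not_mem hi ha)]

lemma stickSum_insert_update (ha : a ∉ T) (c₀ γ₀ P Q : ℝ) :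
    stickSum (insert a T) (Function.update c a c₀) (Function.update γ a γ₀) P Q =
      c₀ * max (P - γ₀ * Q) 0 + stickSum T c γ P Q :=
  sum_insert_update_update ha (fun c g => c * max (P - g * Q) 0) c₀ γ₀

/-- Past its meeting point `x₀` with the stick sum, the line `s₀ x - w₀` dominates, its slope being
at least `∑ c`. -/
lemma stickSum_insert_of_eq (ha : a ∉ T) (hc : ∀ i, 0 ≤ c i) {s₀ w₀ x₀ : ℝ}
    (hs₀ : ∑ i ∈ T, c i ≤ s₀) (hx₀ : stickSum T c γ x₀ 1 = s₀ * x₀ - w₀) {P Q : ℝ}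
    (hQ : 0 ≤ Q) :
    max (s₀ * P - w₀ * Q) (stickSum T c γ P Q) =
      stickSum (insert a T) (Function.update c a (s₀ - ∑ i ∈ T, c i))
        (Function.update (fun i => min (γ i) x₀) a x₀) P Q := by
  rw [stickSum_insert_update ha, stickSum_min x₀ hQ]
  have hcross : stickSum T c γ (x₀ * Q) Q = s₀ * (x₀ * Q) - w₀ * Q := by
    have hhom := stickSum_mul_mul (T := T) (c := c) (γ := γ) hQ x₀ 1
    rw [mul_one] at hhom
    rw [mul_comm x₀, hhom, hx₀]
    ring
  rcases le_total P (x₀ * Q) with h | h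
  · have hlip := stickSum_le_stickSum_add (T := T) (γ := γ) hc Q h
    rw [min_eq_left h, max_eq_right (by nlinarith [mul_nonneg (sub_nonneg.2 hs₀) (sub_nonneg.2 h)]),
      max_eq_right (by linarith)]
    ring
  · have hlip := stickSum_le_stickSum_add (T := T) (γ := γ) hc Q h
    rw [min_eq_right h, max_eq_left (by nlinarith [mul_nonneg (sub_nonneg.2 hs₀) (sub_nonneg.2 h)]),
      max_eq_left (by linarith), hcross]
    ring

/-- Since `s₀ ≥ ∑ c`, the line `s₀ x - w₀` minus the stick sum is nondecreasing in `x ≥ 0` and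
starts at `-w₀ ≤ 0`: either it vanishes somewhere, or the line stays below the stick sum. -/
lemma exists_stickSum_eq_max_insert (ha : a ∉ T) (hc : ∀ i, 0 ≤ c i) (hγ : ∀ i, 0 ≤ γ i)
    {s₀ w₀ : ℝ} (hw₀ : 0 ≤ w₀) (hs₀ : ∑ i ∈ T, c i ≤ s₀) :
    ∃ c' γ' : ι → ℝ, (∀ i, 0 ≤ c' i) ∧ (∀ i, 0 ≤ γ' i) ∧ ∑ i ∈ insert a T, c' i ≤ s₀ ∧
      ∑ i ∈ insert a T, c' i * γ' i ≤ max w₀ (∑ i ∈ T, c i * γ i) ∧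
      ∀ P Q, 0 ≤ P → 0 ≤ Q →
        max (s₀ * P - w₀ * Q) (stickSum T c γ P Q) = stickSum (insert a T) c' γ' P Q := by
  by_cases hcross : ∃ X, 0 ≤ X ∧ stickSum T c γ X 1 ≤ s₀ * X - w₀
  · obtain ⟨X, hX, hXle⟩ := hcross
    obtain ⟨x₀, ⟨hx₀, -⟩, hx₀eq⟩ : ∃ x₀ ∈ Set.Icc 0 X, s₀ * x₀ - w₀ - stickSum T c γ x₀ 1 = 0 := by
      refine intermediate_value_Icc hX (Continuous.continuousOn ?_) ⟨?_, by linarith⟩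
      · exact ((continuous_const.mul continuous_id).sub continuous_const).sub
          (continuous_stickSum 1)
      · simp [stickSum_zero_left hγ zero_le_one, hw₀]
    have hx₀stick : stickSum T c γ x₀ 1 = s₀ * x₀ - w₀ := by linarith
    refine ⟨Function.update c a (s₀ - ∑ i ∈ T, c i), Function.update (fun i => min (γ i) x₀) a x₀,
      fun i => (le_update_iff.2 ⟨sub_nonneg.2 hs₀, fun j _ => hc j⟩ : (0 : ι → ℝ) ≤ _) i,
      fun i => (le_update_iff.2 ⟨hx₀, fun j _ => le_min (hγ j) hx₀⟩ : (0 : ι → ℝ) ≤ _) i,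
      ?_, ?_, fun P Q _ hQ => stickSum_insert_of_eq ha hc hs₀ hx₀stick hQ⟩
    · rw [sum_insert ha, Function.update_self, sum_update_of_notMem ha]
      linarith
    · rw [sum_insert_update_update ha (· * ·), sum_mul_min_eq, hx₀stick]
      exact le_max_of_le_left (by linarith)
  · push Not at hcross
    refine ⟨Function.update c a 0, Function.update γ a 0,
      fun i => (le_update_iff.2 ⟨le_rfl, fun j _ => hc j⟩ : (0 : ι → ℝ) ≤ _) i,
      fun i => (le_update_iff.2 ⟨le_rfl, fun j _ => hγ j⟩ : (0 : ι → ℝ) ≤ _) i,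
      ?_, ?_, fun P Q hP hQ => ?_⟩
    · rwa [sum_insert ha, Function.update_self, sum_update_of_notMem ha, zero_add]
    · rw [sum_insert_update_update ha (· * ·), zero_mul, zero_add]
      exact le_max_right _ _
    · rw [stickSum_insert_update ha, zero_mul, zero_add,
        max_eq_right (mul_sub_mul_le_stickSum hc hγ (fun x hx => (hcross x hx).le) hP hQ)]

theorem exists_stickSum_eq_fold_max {s w : ι → ℝ} (hs : ∀ i, 0 ≤ s i) (hw : ∀ i, 0 ≤ w i)
    (T : Finset ι) {S W : ℝ} (hS : 0 ≤ S) (hW : 0 ≤ W) (hsS : ∀ i ∈ T, s i ≤ S)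
    (hwW : ∀ i ∈ T, w i ≤ W) :
    ∃ c γ : ι → ℝ, (∀ i, 0 ≤ c i) ∧ (∀ i, 0 ≤ γ i) ∧ ∑ i ∈ T, c i ≤ S ∧
      ∑ i ∈ T, c i * γ i ≤ W ∧ ∀ P Q, 0 ≤ P → 0 ≤ Q →
        T.fold max 0 (fun i => s i * P - w i * Q) = stickSum T c γ P Q := by
  induction T using Finset.induction_on_max_value s generalizing S with
  | empty =>
    exact ⟨0, 0, fun _ => le_rfl, fun _ => le_rfl, by simpa, by simpa,
      fun P Q _ _ => by simp [stickSum]⟩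
  | insert a T ha hmax ih =>
    obtain ⟨c, γ, hc, hγ, hcS, hcW, hrep⟩ :=
      ih (hs a) hmax fun i hi => hwW i (mem_insert_of_mem hi)
    obtain ⟨c', γ', hc', hγ', hc'S, hc'W, hrep'⟩ :=
      exists_stickSum_eq_max_insert ha hc hγ (hw a) hcS
    refine ⟨c', γ', hc', hγ', hc'S.trans (hsS a (mem_insert_self a T)),
      hc'W.trans (max_le (hwW a (mem_insert_self a T)) hcW), fun P Q hP hQ => ?_⟩
    rw [fold_insert ha, hrep P Q hP hQ, hrep' P Q hP hQ]

end Decomposition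

section Separation

variable {ι ι' : Type*} [Fintype ι] [Fintype ι']

lemma isCompact_setOf_substochastic : IsCompact {M : Matrix ι' ι ℝ | Substochastic M} := by
  refine (isCompact_Icc (a := (0 : ι' → ι → ℝ)) (b := 1)).of_isClosed_subset ?_ ?_
  · simp only [Substochastic, Set.ofPred_and, Set.ofPred_forall]
    exact (isClosed_iInter fun i => isClosed_iInter fun j =>
      isClosed_le continuous_const (by fun_prop)).inter
        (isClosed_iInter fun j => isClosed_le (by fun_prop) continuous_const)
  · exact fun M hM => ⟨fun i j => hM.1 i j, fun i j =>
      (single_le_sum (fun i' _ => hM.1 i' j) (mem_univ i)).trans (hM.2 j)⟩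

lemma convex_setOf_substochastic : Convex ℝ {M : Matrix ι' ι ℝ | Substochastic M} := by
  intro M hM N hN θ₁ θ₂ h₁ h₂ h
  refine ⟨fun i j => ?_, fun j => ?_⟩
  · simp only [Matrix.add_apply, Matrix.smul_apply, smul_eq_mul]
    exact add_nonneg (mul_nonneg h₁ (hM.1 i j)) (mul_nonneg h₂ (hN.1 i j))
  · simp only [Matrix.add_apply, Matrix.smul_apply, smul_eq_mul, sum_add_distrib, ← mul_sum]
    nlinarith [hM.2 j, hN.2 j]

lemma convex_setOf_sum_le {φ : ι → ℝ → ℝ} (hφ : ∀ i, ConvexOn ℝ Set.univ (φ i)) (r : ℝ) :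
    Convex ℝ {u : ι → ℝ | ∑ i, φ i (u i) ≤ r} := by
  intro u hu v hv θ₁ θ₂ h₁ h₂ h
  calc ∑ i, φ i ((θ₁ • u + θ₂ • v) i)
      ≤ ∑ i, (θ₁ * φ i (u i) + θ₂ * φ i (v i)) :=
        sum_le_sum fun i _ => (hφ i).2 (Set.mem_univ _) (Set.mem_univ _) h₁ h₂ h
    _ = θ₁ * ∑ i, φ i (u i) + θ₂ * ∑ i, φ i (v i) := by
        rw [sum_add_distrib, mul_sum, mul_sum]
    _ ≤ θ₁ * r + θ₂ * r := by gcongr <;> assumption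
    _ = r := by rw [← add_mul, h, one_mul]

lemma exists_apply_eq_dotProduct_sub_dotProduct (f : StrongDual ℝ ((ι' → ℝ) × (ι' → ℝ))) :
    ∃ s w : ι' → ℝ, ∀ u v, f (u, v) = s ⬝ᵥ u - w ⬝ᵥ v := by
  classical
  refine ⟨fun i => f (fun j => if i = j then 1 else 0, 0),
    fun i => -f (0, fun j => if i = j then 1 else 0), fun u v => ?_⟩
  have hu := LinearMap.pi_apply_eq_sum_univ (f.toLinearMap ∘ₗ LinearMap.inl ℝ _ _) u
  have hv := LinearMap.pi_apply_eq_sum_univ (f.toLinearMap ∘ₗ LinearMap.inr ℝ _ _) v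
  simp only [LinearMap.coe_comp, Function.comp_apply, LinearMap.inl_apply,
    LinearMap.inr_apply, ContinuousLinearMap.coe_coe, smul_eq_mul] at hu hv
  rw [show (u, v) = (u, 0) + (0, v) by simp, map_add, hu, hv, dotProduct, dotProduct]
  simp [mul_comm]

lemma sum_max_pi_single [DecidableEq ι'] (i : ι') (t : ℝ) :
    ∑ k, max (Pi.single i t k) 0 = max t 0 := by
  rw [sum_eq_single i (fun k _ hk => by simp [hk]) (by simp)]
  simp

lemma exists_separating_weights {ε η : ℝ} (hε : 0 ≤ ε) (hη : 0 ≤ η) {p q : ι → ℝ}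
    {p' q' : ι' → ℝ} (h : ¬ ApproxSubMaj ε η p q p' q') :
    ∃ (s w : ι' → ℝ) (r : ℝ), (∀ i, 0 ≤ s i) ∧ (∀ i, 0 ≤ w i) ∧
      (∀ M, Substochastic M → s ⬝ᵥ (M *ᵥ p) - w ⬝ᵥ (M *ᵥ q) < r) ∧
      ∀ u v, ∑ i, max (p' i - u i) 0 ≤ ε → ∑ i, max (v i - q' i) 0 ≤ η →
        r < s ⬝ᵥ u - w ⬝ᵥ v := by
  classical
  have hKD : Disjoint ((fun M : Matrix ι' ι ℝ => (M *ᵥ p, M *ᵥ q)) '' {M | Substochastic M})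
      ({u | ∑ i, max (p' i - u i) 0 ≤ ε} ×ˢ {v | ∑ i, max (v i - q' i) 0 ≤ η}) := by
    rw [Set.disjoint_left]
    rintro _ ⟨M, hM, rfl⟩ ⟨hu, hv⟩
    exact h ⟨M, fun i => max (p' i - (M *ᵥ p) i) 0, fun i => max ((M *ᵥ q) i - q' i) 0, hM,
      fun i => le_max_right _ _, fun i => le_max_right _ _, hu, hv,
      fun i => by linarith [le_max_left (p' i - (M *ᵥ p) i) 0],
      fun i => by linarith [le_max_left ((M *ᵥ q) i - q' i) 0]⟩
  have hlin : IsLinearMap ℝ fun M : Matrix ι' ι ℝ => (M *ᵥ p, M *ᵥ q) :=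
    ⟨fun M N => by simp [Matrix.add_mulVec], fun t M => by simp [Matrix.smul_mulVec]⟩
  obtain ⟨f, r, r', hK, hrr', hD⟩ := geometric_hahn_banach_compact_closed
    (convex_setOf_substochastic.is_linear_image hlin)
    (isCompact_setOf_substochastic.image (by fun_prop))
    ((convex_setOf_sum_le (φ := fun i x => max (p' i - x) 0) (fun i =>
      ((convexOn_const _ convex_univ).sub (concaveOn_id convex_univ)).sup
        (convexOn_const 0 convex_univ)) ε).prod
      (convex_setOf_sum_le (φ := fun i x => max (x - q' i) 0) (fun i =>
        ((convexOn_id convex_univ).sub (concaveOn_const _ convex_univ)).sup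
          (convexOn_const 0 convex_univ)) η))
    ((isClosed_le (by fun_prop) continuous_const).prod (isClosed_le (by fun_prop) continuous_const))
    hKD
  obtain ⟨s, w, hf⟩ := exists_apply_eq_dotProduct_sub_dotProduct f
  have hD' : ∀ u v, ∑ i, max (p' i - u i) 0 ≤ ε → ∑ i, max (v i - q' i) 0 ≤ η →
      r < s ⬝ᵥ u - w ⬝ᵥ v := fun u v hu hv => hrr'.trans (hf u v ▸ hD (u, v) ⟨hu, hv⟩)
  refine ⟨s, w, r, fun i => ?_, fun i => ?_, fun M hM => hf _ _ ▸ hK _ ⟨M, hM, rfl⟩, hD'⟩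
  · refine nonneg_of_forall_lt_add_mul (r := r) (a := s ⬝ᵥ p' - w ⬝ᵥ q') fun t ht => ?_
    have := hD' (p' - Pi.single i (-t)) q' (by simpa [sum_max_pi_single, ht] using hε)
      (by simpa using hη)
    rw [dotProduct_sub, dotProduct_single] at this
    linarith
  · refine nonneg_of_forall_lt_add_mul (r := r) (a := s ⬝ᵥ p' - w ⬝ᵥ q') fun t ht => ?_
    have := hD' p' (q' + Pi.single i (-t)) (by simpa using hε)
      (by simpa [sum_max_pi_single, ht] using hη)
    rw [dotProduct_add, dotProduct_single] at this
    linarith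

lemma exists_subprob_sum_mul_eq_fold_max (f : ι' → ℝ) (T : Finset ι') :
    ∃ m : ι' → ℝ, (∀ i, 0 ≤ m i) ∧ ∑ i, m i ≤ 1 ∧ ∑ i, m i * f i = T.fold max 0 f := by
  classical
  induction T using Finset.induction_on with
  | empty => exact ⟨0, fun _ => le_rfl, by simp, by simp⟩
  | insert a T ha ih =>
    obtain ⟨m, hm0, hm1, hmf⟩ := ih
    rw [fold_insert ha]
    rcases le_total (f a) (T.fold max 0 f) with h | h
    · exact ⟨m, hm0, hm1, by rw [max_eq_right h, hmf]⟩
    · refine ⟨Pi.single a 1, fun i => ?_, by simp, ?_⟩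
      · rw [Pi.single_apply]
        split_ifs <;> norm_num
      · rw [max_eq_left h]
        exact (single_dotProduct (v := f) 1 a).trans (one_mul _)

lemma exists_substochastic_sum_mul_eq_fold_max (h : ι' → ι → ℝ) :
    ∃ M : Matrix ι' ι ℝ, Substochastic M ∧
      ∀ j, ∑ i, M i j * h i j = univ.fold max 0 fun i => h i j := by
  choose m hm0 hm1 hmh using fun j => exists_subprob_sum_mul_eq_fold_max (fun i => h i j) univ
  exact ⟨Matrix.of fun i j => m j i, ⟨fun i j => hm0 j i, hm1⟩, hmh⟩

lemma dotProduct_mulVec_sub_dotProduct_mulVec (s w : ι' → ℝ) (M : Matrix ι' ι ℝ)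
    (p q : ι → ℝ) :
    s ⬝ᵥ (M *ᵥ p) - w ⬝ᵥ (M *ᵥ q) = ∑ j, ∑ i, M i j * (s i * p j - w i * q j) := by
  simp only [dotProduct, mulVec, mul_sum, ← sum_sub_distrib]
  rw [sum_comm]
  refine sum_congr rfl fun j _ => sum_congr rfl fun i _ => ?_
  ring

theorem approxSubMaj_of_hockeyStick_le {ε η : ℝ} {p q : ι → ℝ} {p' q' : ι' → ℝ}
    (hp : ∀ j, 0 ≤ p j) (hq : ∀ j, 0 ≤ q j) (hp' : ∀ i, 0 ≤ p' i) (hq' : ∀ i, 0 ≤ q' i)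
    (hε : 0 ≤ ε) (hη : 0 ≤ η)
    (h : ∀ γ, 0 ≤ γ → hockeyStick γ p' q' - ε - γ * η ≤ hockeyStick γ p q) :
    ApproxSubMaj ε η p q p' q' := by
  classical
  by_contra hnot
  obtain ⟨s, w, r, hs, hw, hK, hD⟩ := exists_separating_weights hε hη hnot
  rcases isEmpty_or_nonempty ι' with hι' | hι'
  · have := (hK 0 ⟨fun i => isEmptyElim i, fun j => by simp⟩).trans
      (hD p' q' (by simpa using hε) (by simpa using hη))
    simp at this
  obtain ⟨i₀, -, hi₀⟩ := exists_max_image univ s univ_nonempty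
  obtain ⟨j₀, -, hj₀⟩ := exists_max_image univ w univ_nonempty
  obtain ⟨c, γ, hc, hγ, hcS, hcW, hrep⟩ := exists_stickSum_eq_fold_max hs hw univ (hs i₀) (hw j₀)
    (fun i _ => hi₀ i (mem_univ i)) (fun i _ => hj₀ i (mem_univ i))
  obtain ⟨M, hM, hMcol⟩ := exists_substochastic_sum_mul_eq_fold_max
    fun i j => s i * p j - w i * q j
  have hcorner := hD (p' - Pi.single i₀ ε) (q' + Pi.single j₀ η)
    (by simp [sum_max_pi_single, hε]) (by simp [sum_max_pi_single, hη])
  rw [dotProduct_sub, dotProduct_add, dotProduct_single, dotProduct_single] at hcorner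
  have hlines : s ⬝ᵥ p' - w ⬝ᵥ q' ≤ ∑ i, stickSum univ c γ (p' i) (q' i) := by
    rw [dotProduct, dotProduct, ← sum_sub_distrib]
    refine sum_le_sum fun i _ => ?_
    rw [← hrep _ _ (hp' i) (hq' i)]
    exact (le_fold_max _).2 (Or.inr ⟨i, mem_univ i, le_rfl⟩)
  have hchain : s ⬝ᵥ p' - w ⬝ᵥ q' - ε * s i₀ - η * w j₀ ≤ s ⬝ᵥ (M *ᵥ p) - w ⬝ᵥ (M *ᵥ q) :=
    calc s ⬝ᵥ p' - w ⬝ᵥ q' - ε * s i₀ - η * w j₀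
        ≤ ∑ i, stickSum univ c γ (p' i) (q' i) - ε * ∑ k, c k - η * ∑ k, c k * γ k := by
          nlinarith [mul_le_mul_of_nonneg_left hcS hε, mul_le_mul_of_nonneg_left hcW hη]
      _ = ∑ k, c k * (hockeyStick (γ k) p' q' - ε - γ k * η) := by
          simp only [sum_stickSum_eq, mul_sub, sum_sub_distrib, mul_sum]
          ring_nf
      _ ≤ ∑ k, c k * hockeyStick (γ k) p q :=
          sum_le_sum fun k _ => mul_le_mul_of_nonneg_left (h (γ k) (hγ k)) (hc k)
      _ = s ⬝ᵥ (M *ᵥ p) - w ⬝ᵥ (M *ᵥ q) := by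
          rw [← sum_stickSum_eq, dotProduct_mulVec_sub_dotProduct_mulVec]
          exact sum_congr rfl fun j _ => by rw [hMcol j, hrep _ _ (hp j) (hq j)]
  linarith [hK M hM]

end Separation

/-- `(p,q) ≻_{ε,η} (p',q')` iff `β_x(p,q) ≤ β_{x+ε}(p',q') + η` for all `x ∈ ℝ`. -/
theorem stmt_8 {n n' : ℕ} (p q : Fin n → ℝ) (p' q' : Fin n' → ℝ)
    (hp : ∀ i, 0 ≤ p i) (hq : ∀ i, 0 ≤ q i)
    (hp' : ∀ i, 0 ≤ p' i) (hq' : ∀ i, 0 ≤ q' i)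
    (ε η : ℝ) (hε : 0 ≤ ε) (hη : 0 ≤ η) :
    ApproxSubMaj ε η p q p' q' ↔
      ∀ x : ℝ, beta x p q ≤ beta (x + ε) p' q' + ((η : ℝ) : EReal) :=
  ⟨fun h x => h.beta_le x, fun h => approxSubMaj_of_hockeyStick_le hp hq hp' hq' hε hη
    fun _ hγ => hockeyStick_sub_le_of_beta_le h hγ⟩
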